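/- arXiv:1708.07579 — 3 statements merged into one kernel-verified Lean document; each statement's English description precedes it below -/
import Mathlib

section
/- If Maker, as second player, has a winning strategy in the Maker-Breaker Hamiltonicity game on E(K_n), then Maker, as second player, has a winning strategy in the Fixed Hamiltonian Path game on E(K_{n+2}) for any choice of the two fixed vertices. -/
/-- `MakerWins X F t M B` : in the Maker-Breaker positional game on board `X` with
winning sets `F`, from the position where Maker has claimed the elements of `M`,
Breaker has claimed the elements of `B`, and it is Maker's turn iff `t = true`,
Maker has a winning strategy (he can ensure to claim all elements of some winning set). -/
inductive MakerWins {α : Type} [DecidableEq α] (X : Finset α) (F : Set (Finset α)) :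
    Bool → Finset α → Finset α → Prop
  | claim {t : Bool} {M B : Finset α} (A : Finset α) (hA : A ∈ F) (hAM : A ⊆ M) :
      MakerWins X F t M B
  | makerMove {M B : Finset α} (e : α) (he : e ∈ X) (heM : e ∉ M) (heB : e ∉ B)
      (h : MakerWins X F false (insert e M) B) : MakerWins X F true M B
  | breakerMove {M B : Finset α} (e : α) (he : e ∈ X) (heM : e ∉ M) (heB : e ∉ B)
      (h : ∀ f ∈ X, f ∉ M → f ∉ B → MakerWins X F true M (insert f B)) :
      MakerWins X F false M B

/-- Maker, moving first, has a winning strategy in the game `(X, F)`. -/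
def MakerWinsFirst {α : Type} [DecidableEq α] (X : Finset α) (F : Set (Finset α)) : Prop :=
  MakerWins X F true ∅ ∅

/-- Maker, moving second (Breaker moves first), has a winning strategy in `(X, F)`. -/
def MakerWinsSecond {α : Type} [DecidableEq α] (X : Finset α) (F : Set (Finset α)) : Prop :=
  MakerWins X F false ∅ ∅

/-- The board of games played on the edge set of the complete graph `K_n`. -/
def Board (n : ℕ) : Finset (Sym2 (Fin n)) := (⊤ : SimpleGraph (Fin n)).edgeFinset

/-- Edge sets of Hamiltonian cycles of `K_n`: the winning sets of the Hamiltonicity game. -/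
def HamCycles (n : ℕ) : Set (Finset (Sym2 (Fin n))) :=
  {H | ∃ (a : Fin n) (p : (⊤ : SimpleGraph (Fin n)).Walk a a),
    p.IsHamiltonianCycle ∧ H = p.edges.toFinset}

/-- Edge sets of Hamiltonian paths of `K_n`: the winning sets of the Hamiltonian Path game. -/
def HamPaths (n : ℕ) : Set (Finset (Sym2 (Fin n))) :=
  {H | ∃ (a b : Fin n) (p : (⊤ : SimpleGraph (Fin n)).Walk a b),
    p.IsHamiltonian ∧ H = p.edges.toFinset}

/-- Edge sets of Hamiltonian paths of `K_n` with endpoints `u` and `v`: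
the winning sets of the Fixed Hamiltonian Path game. -/
def FixedHamPaths (n : ℕ) (u v : Fin n) : Set (Finset (Sym2 (Fin n))) :=
  {H | ∃ p : (⊤ : SimpleGraph (Fin n)).Walk u v, p.IsHamiltonian ∧ H = p.edges.toFinset}

/-!
Identify `K_n` with `K_{n+2}` minus the two fixed vertices `u` and `v`. Maker plays his winning
Hamiltonicity strategy on the inner edges and a pairing strategy on the edges at `u` and `v`:
for two chosen inner vertices `x₀ ≠ y₀`, `ux₀` is paired with `uy₀`, `vx₀` with `vy₀`, and `ux`
with `vx` for every other inner vertex `x`. Any other move of Breaker (the edge `uv`, or an edge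
whose partner Maker already holds) is treated as a pass, answered by a free move in the inner
game, and an extra move never hurts Maker.
In the end Maker holds a Hamiltonian cycle `C` on the inner vertices, every inner vertex but at
most one is joined to `u` or to `v`, and both `u` and `v` have a neighbour. Hence some edge `ab`
of `C` has `a` joined to `u` and `b` joined to `v`, and `u, a, …(C − ab)…, b, v` is the path.
-/

namespace SimpleGraph.Walk

variable {V : Type*} {G : SimpleGraph V}

theorem exists_crossing_edge_of_ne {A B : Set V} :
    ∀ {s t : V} (W : G.Walk s t), s ∈ A → t ∈ B → s ≠ t → (∀ z ∈ W.support, z ∈ A ∨ z ∈ B) →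
      ∃ a ∈ A, ∃ b ∈ B, s(a, b) ∈ W.edges
  | _, _, nil, _, _, hst, _ => absurd rfl hst
  | s, _, cons (v := m) _ W, hs, ht, _, hcov => by
    by_cases hm : m ∈ B
    · exact ⟨s, hs, m, hm, by simp⟩
    have hmA : m ∈ A := (hcov m (by simp)).resolve_right hm
    obtain ⟨a, ha, b, hb, hab⟩ := exists_crossing_edge_of_ne W hmA ht (fun hmt => hm (hmt ▸ ht))
      fun z hz => hcov z (by simp [hz])
    exact ⟨a, ha, b, hb, by simp [hab]⟩

lemma IsCycle.snd_eq_or_penultimate_eq {a b : V} {p : G.Walk a a} (hp : p.IsCycle)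
    (h : s(a, b) ∈ p.edges) : b = p.snd ∨ b = p.penultimate := by
  rw [← p.cons_tail_eq hp.not_nil, edges_cons, List.mem_cons] at h
  rcases h with h | h
  · exact .inl (Sym2.congr_right.1 h)
  · have htail : ¬p.tail.Nil := not_nil_iff_lt_length.2 <| by
      have := hp.three_le_length
      have := length_tail_add_one hp.not_nil
      omega
    right
    rw [hp.isPath_tail.eq_penultimate_of_mem_edges h]
    conv_rhs => rw [← p.cons_tail_eq hp.not_nil]
    rw [penultimate_cons_of_not_nil _ _ htail]

variable [DecidableEq V]

theorem exists_crossing_edge {A B : Set V} {s t : V} (W : G.Walk s t)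
    (hcov : ∀ z ∈ W.support, z ∈ A ∨ z ∈ B) {a b : V} (ha : a ∈ A) (hb : b ∈ B)
    (haW : a ∈ W.support) (hbW : b ∈ W.support) (hab : a ≠ b) :
    ∃ a ∈ A, ∃ b ∈ B, s(a, b) ∈ W.edges := by
  have from_start : ∀ {A B : Set V}, (∀ z ∈ W.support, z ∈ A ∨ z ∈ B) → s ∈ A →
      ∀ b ∈ B, ∀ hbW : b ∈ W.support, s ≠ b → ∃ a ∈ A, ∃ b ∈ B, s(a, b) ∈ W.edges := by
    intro A B hcov hs b hb hbW hsb
    obtain ⟨x, hx, y, hy, hxy⟩ := (W.takeUntil b hbW).exists_crossing_edge_of_ne hs hb hsb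
      fun z hz => hcov z (W.support_takeUntil_subset_support hbW hz)
    exact ⟨x, hx, y, hy, W.edges_takeUntil_subset_edges hbW hxy⟩
  have hstart : (s ∈ A ∧ s ≠ b) ∨ (s ∈ B ∧ s ≠ a) := by
    rcases hcov s W.start_mem_support with hs | hs
    · by_cases hsb : s = b
      · exact .inr ⟨hsb ▸ hb, fun hsa => hab (hsa ▸ hsb)⟩
      · exact .inl ⟨hs, hsb⟩
    · by_cases hsa : s = a
      · exact .inl ⟨hsa ▸ ha, fun hsb => hab (hsa ▸ hsb)⟩
      · exact .inr ⟨hs, hsa⟩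
  rcases hstart with ⟨hs, hsb⟩ | ⟨hs, hsa⟩
  · exact from_start hcov hs b hb hbW hsb
  · obtain ⟨x, hx, y, hy, hxy⟩ := from_start (fun z hz => (hcov z hz).symm) hs a ha haW hsa
    exact ⟨y, hy, x, hx, Sym2.eq_swap ▸ hxy⟩

lemma IsHamiltonian.reverse {a b : V} {p : G.Walk a b} (hp : p.IsHamiltonian) :
    p.reverse.IsHamiltonian := fun z => by
  rw [support_reverse, List.count_reverse]
  exact hp z

lemma IsHamiltonian.cons_map_concat {V' : Type*} [DecidableEq V'] {G' : SimpleGraph V'}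
    (f : G ↪g G') {a b : V} {R : G.Walk a b} (hR : R.IsHamiltonian) {u v : V'} (huv : u ≠ v)
    (hf : ∀ z, z ∈ Set.range f ↔ z ≠ u ∧ z ≠ v) (hu : G'.Adj u (f a)) (hv : G'.Adj (f b) v) :
    (cons hu ((R.map f.toHom).concat hv)).IsHamiltonian := by
  intro z
  have hfz : ∀ x, f x ≠ u ∧ f x ≠ v := fun x => (hf (f x)).1 ⟨x, rfl⟩
  simp only [support_cons, support_concat, support_map, List.count_cons, List.count_append,
    beq_iff_eq]
  by_cases hz : z ∈ Set.range f
  · obtain ⟨x, rfl⟩ := hz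
    simp [List.count_map_of_injective _ _ f.injective, hR x, Ne.symm (hfz x).1, Ne.symm (hfz x).2]
  · rw [List.count_eq_zero.2 fun hzR => hz (let ⟨x, _, hx⟩ := List.mem_map.1 hzR; ⟨x, hx⟩)]
    rcases not_and_or.1 (mt (hf z).2 hz) with hzu | hzv
    · simp [not_not.1 hzu, Ne.symm huv]
    · simp [not_not.1 hzv, huv]

lemma IsHamiltonian.mem_support_tail_iff {a b : V} {p : G.Walk a b} (hp : p.IsHamiltonian)
    (hnil : ¬p.Nil) {z : V} : z ∈ p.tail.support ↔ z ≠ a := by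
  have hnodup := hp.isPath.support_nodup
  rw [← cons_support_tail hnil, List.nodup_cons] at hnodup
  have hz := hp.mem_support z
  rw [← cons_support_tail hnil, List.mem_cons] at hz
  exact ⟨fun h hza => hnodup.1 (hza ▸ h), hz.resolve_left⟩

variable [Fintype V]

lemma IsHamiltonianCycle.reverse {a : V} {p : G.Walk a a} (hp : p.IsHamiltonianCycle) :
    p.reverse.IsHamiltonianCycle :=
  isHamiltonianCycle_iff_isCycle_and_length_eq.2 ⟨hp.isCycle.reverse, by simpa using hp.length_eq⟩

theorem IsHamiltonianCycle.exists_isHamiltonian_of_mem_edges {a b c : V} {p : G.Walk c c}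
    (hp : p.IsHamiltonianCycle) (h : s(a, b) ∈ p.edges) :
    ∃ q : G.Walk a b, q.IsHamiltonian ∧ q.edges ⊆ p.edges := by
  have ha := hp.mem_support a
  have hrp := (p.rotate_edges a ha).perm
  have from_snd : ∀ r : G.Walk a a, r.IsHamiltonianCycle → r.edges ⊆ p.edges → b = r.snd →
      ∃ q : G.Walk a b, q.IsHamiltonian ∧ q.edges ⊆ p.edges := by
    rintro r hr hrp rfl
    refine ⟨r.tail.reverse, hr.isHamiltonian_tail.reverse, fun e he => hrp ?_⟩
    simpa using List.mem_of_mem_tail (by simpa using he)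
  rcases (hp.rotate ha).isCycle.snd_eq_or_penultimate_eq (hrp.mem_iff.2 h) with hb | hb
  · exact from_snd _ (hp.rotate ha) hrp.subset hb
  · exact from_snd _ (hp.rotate ha).reverse (fun e he => hrp.subset (by simpa using he))
      (by rwa [snd_reverse])

theorem IsHamiltonianCycle.exists_crossing_edge {c : V} {p : G.Walk c c}
    (hp : p.IsHamiltonianCycle) {A B : Set V} (hA : A.Nonempty) (hB : B.Nonempty)
    (hAB : (A ∪ B)ᶜ.Subsingleton) : ∃ a ∈ A, ∃ b ∈ B, s(a, b) ∈ p.edges := by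
  obtain ⟨a, ha⟩ := hA
  obtain ⟨b, hb⟩ := hB
  have hcard : 3 ≤ Fintype.card V := hp.length_eq ▸ hp.isCycle.three_le_length
  have avoid : ∀ x y : V, ∃ z, z ≠ x ∧ z ≠ y := by
    intro x y
    obtain ⟨z, -, hz⟩ := Finset.exists_mem_notMem_of_card_lt_card
      (s := {x, y}) (t := Finset.univ) (Finset.card_le_two.trans_lt (by simp; omega))
    exact ⟨z, by simpa [not_or] using hz⟩
  obtain ⟨w, hwa, hwb, hw⟩ : ∃ w, w ≠ a ∧ w ≠ b ∧ ∀ z, z ≠ w → z ∈ A ∪ B := by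
    rcases (A ∪ B)ᶜ.eq_empty_or_nonempty with hAB' | ⟨w, hw⟩
    · obtain ⟨w, hwa, hwb⟩ := avoid a b
      exact ⟨w, hwa, hwb, fun z _ => Set.compl_empty_iff.1 hAB' ▸ Set.mem_univ z⟩
    · refine ⟨w, fun h => hw (h ▸ .inl ha), fun h => hw (h ▸ .inr hb), fun z hzw => ?_⟩
      by_contra hz
      exact hzw (hAB hz hw)
  -- deleting `w` from the cycle leaves a path on which every vertex lies in `A ∪ B`
  have hwp := hp.mem_support w
  set H := (p.rotate w hwp).tail.reverse
  have hH : H.IsHamiltonian := (hp.rotate _).isHamiltonian_tail.reverse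
  have hnil : ¬H.Nil := not_nil_iff_lt_length.2 (by have := hH.length_eq; omega)
  have hR : ∀ z, z ∈ H.tail.support ↔ z ≠ w := fun z => hH.mem_support_tail_iff hnil
  have hcov : ∀ z ∈ H.tail.support, z ∈ A ∨ z ∈ B := fun z hz => hw z ((hR z).1 hz)
  have hHp : H.tail.edges ⊆ p.edges := fun e he => by
    rw [edges_tail] at he
    have he' := List.mem_of_mem_tail he
    simp only [H, edges_reverse, List.mem_reverse, edges_tail] at he'
    exact (p.rotate_edges w hwp).perm.subset (List.mem_of_mem_tail he')
  obtain ⟨x, hx, y, hy, hxy⟩ : ∃ a ∈ A, ∃ b ∈ B, s(a, b) ∈ H.tail.edges := by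
    by_cases hab : a = b
    · subst hab
      obtain ⟨d, hdw, hda⟩ := avoid w a
      rcases hw d hdw with hd | hd
      · exact H.tail.exists_crossing_edge hcov hd hb ((hR d).2 hdw) ((hR a).2 hwa.symm) hda
      · exact H.tail.exists_crossing_edge hcov ha hd ((hR a).2 hwa.symm) ((hR d).2 hdw)
          (Ne.symm hda)
    · exact H.tail.exists_crossing_edge hcov ha hb ((hR a).2 hwa.symm) ((hR b).2 hwb.symm) hab
  exact ⟨x, hx, y, hy, hHp hxy⟩

end SimpleGraph.Walk

namespace MakerWins

variable {α : Type} [DecidableEq α] {X : Finset α} {F : Set (Finset α)}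

theorem insert_maker_and_true {t : Bool} {M B : Finset α} (h : MakerWins X F t M B) :
    (∀ e ∉ B, MakerWins X F t (insert e M) B) ∧ (t = false → MakerWins X F true M B) := by
  induction h with
  | claim A hA hAM =>
    exact ⟨fun e _ => .claim A hA (hAM.trans (Finset.subset_insert _ _)), fun _ => .claim A hA hAM⟩
  | @makerMove M B f hfX hfM hfB h ih =>
    refine ⟨fun e heB => ?_, by simp⟩
    by_cases heM : e ∈ M
    · rw [Finset.insert_eq_self.2 heM]
      exact .makerMove f hfX hfM hfB h
    by_cases hef : e = f
    · subst hef
      exact ih.2 rfl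
    · refine .makerMove f hfX (by simp [hfM, Ne.symm hef]) hfB ?_
      rw [Finset.insert_comm]
      exact ih.1 e heB
  | @breakerMove M B f hfX hfM hfB h ih =>
    have insert_maker : ∀ e ∉ B, MakerWins X F false (insert e M) B := by
      intro e heB
      by_cases heM : e ∈ M
      · rw [Finset.insert_eq_self.2 heM]
        exact .breakerMove f hfX hfM hfB h
      by_cases hfree : ∃ g ∈ X, g ∉ insert e M ∧ g ∉ B
      · obtain ⟨g, hgX, hgM, hgB⟩ := hfree
        refine .breakerMove g hgX hgM hgB fun g' hg'X hg'M hg'B => ?_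
        have hg'e : g' ≠ e := fun h => hg'M (h ▸ Finset.mem_insert_self e M)
        exact (ih g' hg'X (fun h => hg'M (Finset.mem_insert_of_mem h)) hg'B).1 e
          (by simp [heB, Ne.symm hg'e])
      · -- `e` was the last free element, so Breaker's only move was `e` itself
        push Not at hfree
        have hfe : f = e := by
          by_contra hne
          exact hfB (hfree f hfX (by simp [hfM, hne]))
        subst hfe
        cases h f hfX hfM hfB with
        | claim A hA hAM => exact .claim A hA (hAM.trans (Finset.subset_insert _ _))
        | makerMove g hgX hgM hgB _ =>
          have hgf : g ≠ f := fun hh => hgB (hh ▸ Finset.mem_insert_self f B)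
          exact absurd (hfree g hgX (by simp [hgM, hgf]))
            fun h => hgB (Finset.mem_insert_of_mem h)
    exact ⟨insert_maker, fun _ => .makerMove f hfX hfM hfB (insert_maker f hfB)⟩

theorem true_of_false {M B : Finset α} (h : MakerWins X F false M B) : MakerWins X F true M B :=
  h.insert_maker_and_true.2 rfl

theorem exists_mem {t : Bool} {M B : Finset α} (h : MakerWins X F t M B) : ∃ A, A ∈ F := by
  induction h with
  | claim A hA _ => exact ⟨A, hA⟩
  | makerMove _ _ _ _ _ ih => exact ih
  | breakerMove e he heM heB _ ih => exact ih e he heM heB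

end MakerWins

theorem Finset.card_sdiff_union_insert_lt {α : Type*} [DecidableEq α] {X M M' B : Finset α}
    {g : α} (hM : M ⊆ M') (hgX : g ∈ X) (hgM : g ∉ M) (hgB : g ∉ B) :
    (X \ (M' ∪ insert g B)).card < (X \ (M ∪ B)).card := by
  calc (X \ (M' ∪ insert g B)).card
      ≤ ((X \ (M ∪ B)).erase g).card := Finset.card_le_card fun x => by
        simp only [Finset.mem_sdiff, Finset.mem_union, Finset.mem_insert, Finset.mem_erase]
        exact fun ⟨hx, hx'⟩ => ⟨fun h => hx' (.inr (.inl h)),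
          hx, fun h => h.elim (fun h => hx' (.inl (hM h))) (fun h => hx' (.inr (.inr h)))⟩
    _ < (X \ (M ∪ B)).card := Finset.card_erase_lt_of_mem (by simp [hgX, hgM, hgB])

structure Pairing {α : Type} (X : Finset α) (β : Type) where
  emb : β ↪ α
  partner : β → β
  partner_partner : ∀ p, partner (partner p) = p
  partner_ne : ∀ p, partner p ≠ p
  emb_mem : ∀ p, emb p ∈ X

namespace Pairing

variable {α β : Type} [DecidableEq α] {X : Finset α} {F : Set (Finset α)} (P : Pairing X β)

def Answered (M B : Finset α) : Prop :=
  ∀ p, P.emb p ∈ B → P.emb (P.partner p) ∈ M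

def Covers (M : Finset α) : Prop :=
  ∀ p, P.emb p ∈ M ∨ P.emb (P.partner p) ∈ M

variable {P}

theorem Answered.partner_notMem {M B : Finset α} (h : P.Answered M B) {q : β}
    (hq : P.emb q ∉ M) : P.emb (P.partner q) ∉ insert (P.emb q) B := by
  rw [Finset.mem_insert, not_or]
  refine ⟨fun h' => P.partner_ne q (P.emb.injective h'), fun h' => hq ?_⟩
  simpa [P.partner_partner] using h _ h'

theorem Answered.insert_partner {M B : Finset α} (h : P.Answered M B) (q : β) :
    P.Answered (insert (P.emb (P.partner q)) M) (insert (P.emb q) B) := by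
  intro p hp
  rcases Finset.mem_insert.1 hp with hp | hp
  · rw [P.emb.injective hp]
    exact Finset.mem_insert_self _ _
  · exact Finset.mem_insert_of_mem (h p hp)

theorem Answered.insert_breaker {M M' B : Finset α} (h : P.Answered M B) (hM : M ⊆ M') {g : α}
    (hg : ∀ q, P.emb q = g → P.emb (P.partner q) ∈ M') : P.Answered M' (insert g B) := by
  intro p hp
  rcases Finset.mem_insert.1 hp with hp | hp
  · exact hg p hp
  · exact hM (h p hp)

theorem makerWins {M B : Finset α}
    (hwin : ∀ M', M ⊆ M' → P.Covers M' → ∃ A ∈ F, A ⊆ M') (hMB : P.Answered M B) :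
    MakerWins X F false M B := by
  by_cases hcov : P.Covers M
  · obtain ⟨A, hA, hAM⟩ := hwin M subset_rfl hcov
    exact .claim A hA hAM
  obtain ⟨p, hp, hp'⟩ : ∃ p, P.emb p ∉ M ∧ P.emb (P.partner p) ∉ M := by
    simpa [Covers, not_or] using hcov
  refine .breakerMove (P.emb p) (P.emb_mem p) hp (fun h => hp' (hMB p h)) ?_
  intro g hgX hgM hgB
  by_cases hpair : ∃ q, P.emb q = g ∧ P.emb (P.partner q) ∉ M
  · obtain ⟨q, rfl, hq⟩ := hpair
    refine .makerMove _ (P.emb_mem _) hq (hMB.partner_notMem hgM) ?_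
    exact makerWins (fun M' hM' => hwin M' ((Finset.subset_insert _ _).trans hM'))
      (hMB.insert_partner q)
  · push Not at hpair
    exact (makerWins hwin (hMB.insert_breaker subset_rfl hpair)).true_of_false
termination_by (X \ (M ∪ B)).card
decreasing_by
  · exact Finset.card_sdiff_union_insert_lt (Finset.subset_insert _ _) hgX hgM hgB
  · exact Finset.card_sdiff_union_insert_lt subset_rfl hgX hgM hgB

/-- Maker copies his strategy for the game on `X₀` through `σ`, answers a Breaker move inside the
pairing by its partner, and treats any other Breaker move as a pass. -/
theorem makerWins_of_makerWins {γ : Type} [DecidableEq γ] {X₀ : Finset γ} {F₀ : Set (Finset γ)}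
    (σ : γ ↪ α) (hσX : ∀ e, σ e ∈ X ↔ e ∈ X₀) (hσP : ∀ e p, σ e ≠ P.emb p)
    (hwin : ∀ A₀ ∈ F₀, ∀ M, A₀.map σ ⊆ M → P.Covers M → ∃ A ∈ F, A ⊆ M)
    {M₀ B₀ : Finset γ} {M B : Finset α} (hM : ∀ e, σ e ∈ M ↔ e ∈ M₀)
    (hB : ∀ e, σ e ∈ B ↔ e ∈ B₀) (hMB : P.Answered M B) (h₀ : MakerWins X₀ F₀ false M₀ B₀) :
    MakerWins X F false M B := by
  have endgame : ∀ {A₀ B'}, A₀ ∈ F₀ → A₀ ⊆ M₀ → P.Answered M B' → MakerWins X F false M B' :=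
    fun hA₀ hAM hMB' => P.makerWins (fun M' hM' hcov => hwin _ hA₀ M' (fun x hx => by
      obtain ⟨e, he, rfl⟩ := Finset.mem_map.1 hx
      exact hM' ((hM e).2 (hAM he))) hcov) hMB'
  cases h₀ with
  | claim A₀ hA₀ hAM => exact endgame hA₀ hAM hMB
  | breakerMove e he heM heB hresp => ?_
  refine .breakerMove (σ e) ((hσX e).2 he) (mt (hM e).1 heM) (mt (hB e).1 heB) ?_
  intro g hgX hgM hgB
  by_cases hinner : ∃ f, σ f = g
  · obtain ⟨f, rfl⟩ := hinner
    have hσf : ∀ q, P.emb q ≠ σ f := fun q hq => hσP f q hq.symm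
    cases hresp f ((hσX f).1 hgX) (mt (hM f).2 hgM) (mt (hB f).2 hgB) with
    | claim A₀ hA₀ hAM =>
      exact (endgame hA₀ hAM
        (hMB.insert_breaker subset_rfl fun q hq => absurd hq (hσf q))).true_of_false
    | makerMove e' he' he'M he'B h₁ =>
      refine .makerMove (σ e') ((hσX e').2 he') (mt (hM e').1 he'M) (by simpa [hB] using he'B) ?_
      exact makerWins_of_makerWins σ hσX hσP hwin (M₀ := insert e' M₀) (B₀ := insert f B₀)
        (by simp [hM]) (by simp [hB])
        (hMB.insert_breaker (Finset.subset_insert _ _) fun q hq => absurd hq (hσf q)) h₁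
  · push Not at hinner
    by_cases hpair : ∃ q, P.emb q = g ∧ P.emb (P.partner q) ∉ M
    · obtain ⟨q, rfl, hq⟩ := hpair
      refine .makerMove _ (P.emb_mem _) hq (hMB.partner_notMem hgM) ?_
      exact makerWins_of_makerWins σ hσX hσP hwin (by simp [hM, hσP]) (by simp [hB, hinner])
        (hMB.insert_partner q) (.breakerMove e he heM heB hresp)
    · push Not at hpair
      exact (makerWins_of_makerWins σ hσX hσP hwin hM (by simp [hB, hinner])
        (hMB.insert_breaker subset_rfl hpair) (.breakerMove e he heM heB hresp)).true_of_false
termination_by (X \ (M ∪ B)).card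
decreasing_by
  all_goals first
    | exact Finset.card_sdiff_union_insert_lt (Finset.subset_insert _ _) hgX hgM hgB
    | exact Finset.card_sdiff_union_insert_lt subset_rfl hgX hgM hgB

end Pairing

def starPartner {β : Type} [DecidableEq β] (x₀ y₀ : β) (p : Bool × β) : Bool × β :=
  if p.2 = x₀ then (p.1, y₀) else if p.2 = y₀ then (p.1, x₀) else (!p.1, p.2)

section StarPartner

variable {β : Type} [DecidableEq β] {x₀ y₀ : β}

theorem starPartner_starPartner (hxy : x₀ ≠ y₀) (p : Bool × β) :
    starPartner x₀ y₀ (starPartner x₀ y₀ p) = p := by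
  obtain ⟨c, x⟩ := p
  unfold starPartner
  split_ifs <;> simp_all

theorem starPartner_ne (hxy : x₀ ≠ y₀) (p : Bool × β) : starPartner x₀ y₀ p ≠ p := by
  obtain ⟨c, x⟩ := p
  unfold starPartner
  split_ifs <;> simp_all [Ne.symm hxy]

end StarPartner

def starEdge {V β : Type} (u v : V) (ι : β → V) (p : Bool × β) : Sym2 V :=
  s(cond p.1 u v, ι p.2)

theorem starEdge_injective {V β : Type} {u v : V} {ι : β → V} (huv : u ≠ v)
    (hι : Function.Injective ι) (hιuv : ∀ x, ι x ≠ u ∧ ι x ≠ v) :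
    Function.Injective (starEdge u v ι) := by
  rintro ⟨c, x⟩ ⟨c', x'⟩ h
  cases c <;> cases c' <;> simp_all [starEdge, hι.eq_iff]

theorem mem_board_iff {m : ℕ} {x y : Fin m} : s(x, y) ∈ Board m ↔ x ≠ y := by
  simp [Board]

theorem sym2Map_mem_board_iff {m m' : ℕ} (ι : Fin m ↪ Fin m') (e : Sym2 (Fin m)) :
    ι.sym2Map e ∈ Board m' ↔ e ∈ Board m := by
  induction e using Sym2.ind
  simp [mem_board_iff]

section Star

variable {n : ℕ} {u v : Fin (n + 2)} {ι : Fin n ↪ Fin (n + 2)}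

theorem apply_ne_and_ne (hι : ∀ z, z ∈ Set.range ι ↔ z ≠ u ∧ z ≠ v) (x : Fin n) :
    ι x ≠ u ∧ ι x ≠ v :=
  (hι (ι x)).1 ⟨x, rfl⟩

def starPairing (hι : ∀ z, z ∈ Set.range ι ↔ z ≠ u ∧ z ≠ v) (huv : u ≠ v) {x₀ y₀ : Fin n}
    (hxy : x₀ ≠ y₀) : Pairing (Board (n + 2)) (Bool × Fin n) where
  emb := ⟨starEdge u v ι, starEdge_injective huv ι.injective (apply_ne_and_ne hι)⟩
  partner := starPartner x₀ y₀
  partner_partner := starPartner_starPartner hxy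
  partner_ne := starPartner_ne hxy
  emb_mem p := by
    obtain ⟨c, x⟩ := p
    cases c <;> simp [starEdge, mem_board_iff, Ne.symm (apply_ne_and_ne hι x).1,
      Ne.symm (apply_ne_and_ne hι x).2]

theorem sym2Map_ne_starEdge (hι : ∀ z, z ∈ Set.range ι ↔ z ≠ u ∧ z ≠ v) (e : Sym2 (Fin n))
    (p : Bool × Fin n) : ι.sym2Map e ≠ starEdge u v ι p := by
  induction e using Sym2.ind with | _ a b => ?_
  obtain ⟨c, x⟩ := p
  cases c <;> simp [starEdge, (apply_ne_and_ne hι a).1, (apply_ne_and_ne hι a).2,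
    (apply_ne_and_ne hι b).1, (apply_ne_and_ne hι b).2]

end Star

open SimpleGraph Walk in
theorem exists_fixedHamPath_of_covers {n : ℕ} {u v : Fin (n + 2)} {ι : Fin n ↪ Fin (n + 2)}
    (hι : ∀ z, z ∈ Set.range ι ↔ z ≠ u ∧ z ≠ v) (huv : u ≠ v) {x₀ y₀ : Fin n} (hxy : x₀ ≠ y₀)
    {A₀ : Finset (Sym2 (Fin n))} {M : Finset (Sym2 (Fin (n + 2)))} (hA₀ : A₀ ∈ HamCycles n)
    (hAM : A₀.map ι.sym2Map ⊆ M) (hM : (starPairing hι huv hxy).Covers M) :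
    ∃ A ∈ FixedHamPaths (n + 2) u v, A ⊆ M := by
  obtain ⟨c, p, hp, rfl⟩ := hA₀
  set A : Set (Fin n) := {x | s(u, ι x) ∈ M}
  set B : Set (Fin n) := {x | s(v, ι x) ∈ M}
  have hcov (x : Fin n) (hx₀ : x ≠ x₀) (hy₀ : x ≠ y₀) : x ∈ A ∪ B := by
    simpa [A, B, starPairing, starPartner, starEdge, hx₀, hy₀] using hM (true, x)
  have hA : x₀ ∈ A ∨ y₀ ∈ A := by
    simpa [A, B, starPairing, starPartner, starEdge] using hM (true, x₀)
  have hB : x₀ ∈ B ∨ y₀ ∈ B := by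
    simpa [A, B, starPairing, starPartner, starEdge] using hM (false, x₀)
  have hAB : (A ∪ B)ᶜ.Subsingleton := by
    have hoff : ∀ x ∈ (A ∪ B)ᶜ, x = x₀ ∨ x = y₀ := fun x hx => by
      by_contra h
      push Not at h
      exact hx (hcov x h.1 h.2)
    intro z hz z' hz'
    rcases hoff z hz with rfl | rfl <;> rcases hoff z' hz' with rfl | rfl
    · rfl
    · exact (hA.elim (fun h => hz (.inl h)) fun h => hz' (.inl h)).elim
    · exact (hA.elim (fun h => hz' (.inl h)) fun h => hz (.inl h)).elim
    · rfl
  obtain ⟨a, ha, b, hb, hab⟩ := hp.exists_crossing_edge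
    (hA.elim (⟨x₀, ·⟩) (⟨y₀, ·⟩)) (hB.elim (⟨x₀, ·⟩) (⟨y₀, ·⟩)) hAB
  obtain ⟨R, hR, hRp⟩ := hp.exists_isHamiltonian_of_mem_edges hab
  let f : (⊤ : SimpleGraph (Fin n)) ↪g (⊤ : SimpleGraph (Fin (n + 2))) :=
    Embedding.completeGraph ι
  have hu : (⊤ : SimpleGraph (Fin (n + 2))).Adj u (f a) := Ne.symm (apply_ne_and_ne hι a).1
  have hv : (⊤ : SimpleGraph (Fin (n + 2))).Adj (f b) v := (apply_ne_and_ne hι b).2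
  refine ⟨_, ⟨_, hR.cons_map_concat f huv hι hu hv, rfl⟩, fun e he => ?_⟩
  rw [List.mem_toFinset, edges_cons, edges_concat, edges_map, List.concat_eq_append,
    List.mem_cons, List.mem_append, List.mem_map, List.mem_singleton] at he
  rcases he with rfl | ⟨e, he, rfl⟩ | rfl
  · exact ha
  · exact hAM (Finset.mem_map_of_mem _ (List.mem_toFinset.2 (hRp he)))
  · rw [Sym2.eq_swap]
    exact hb

/-- If Maker, as second player, wins the Hamiltonicity game on `K_n`, then Maker,
as second player, wins the Fixed Hamiltonian Path game on `K_{n+2}` for any choice of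
the two fixed (distinct) vertices. -/
theorem ham_implies_fixed_ham_path (n : ℕ)
    (h : MakerWinsSecond (Board n) (HamCycles n))
    (u v : Fin (n + 2)) (huv : u ≠ v) :
    MakerWinsSecond (Board (n + 2)) (FixedHamPaths (n + 2) u v) := by
  obtain ⟨x₀, y₀, hxy⟩ : ∃ x₀ y₀ : Fin n, x₀ ≠ y₀ := by
    obtain ⟨_, c, p, hp, -⟩ := MakerWins.exists_mem h
    have := hp.length_eq ▸ hp.isCycle.three_le_length
    rw [Fintype.card_fin] at this
    exact ⟨⟨0, by omega⟩, ⟨1, by omega⟩, by simp⟩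
  obtain ⟨ι, hι⟩ : ∃ ι : Fin n ↪ Fin (n + 2), ∀ z, z ∈ Set.range ι ↔ z ≠ u ∧ z ≠ v := by
    have hcard : ({u, v}ᶜ : Finset (Fin (n + 2))).card = n := by
      rw [Finset.card_compl, Finset.card_pair huv, Fintype.card_fin, Nat.add_sub_cancel]
    exact ⟨(({u, v}ᶜ : Finset _).orderEmbOfFin hcard).toEmbedding, fun z => by simp [and_comm]⟩
  exact (starPairing hι huv hxy).makerWins_of_makerWins ι.sym2Map (sym2Map_mem_board_iff ι)
    (sym2Map_ne_starEdge hι) (fun _ hA₀ _ => exists_fixedHamPath_of_covers hι huv hxy hA₀)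
    (by simp) (by simp) (by simp [Pairing.Answered]) h
end

section
/- Let G be a graph whose vertex set is covered by sets W_0,...,W_{m-1} (m ≥ 2) arranged cyclically so that W_i ∩ W_{i+1} = {a_i} (indices mod m), W_i ∩ W_j = ∅ for non-consecutive i, j, and each W_i has at least 3 vertices. If for each i the graph G[W_i] contains a Hamiltonian path P_i of G[W_i] with endpoints a_{i-1} and a_i, then the union of the edge sets of P_0,...,P_{m-1} is the edge set of a Hamiltonian cycle of G. -/
/-!
Concatenating `P_0, …, P_{m-1}` gives a closed walk at `a_{m-1}`. Its support, minus the start,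
is the concatenation of the sets `W_i \ {a_{i-1}}`; these partition the vertices, since two
blocks meet at most in a junction vertex and each `a_{i-1}` is the last vertex of `P_{i-1}`,
whose endpoints differ because `|W_{i-1}| ≥ 2`. Its edges are those of the `P_i`, pairwise
disjoint because two distinct blocks share at most one vertex.
-/

open SimpleGraph List Fin.NatCast

theorem List.flatMap_range_natCast {α : Type*} {m : ℕ} [NeZero m] (f : Fin m → List α) :
    (range m).flatMap (fun k : ℕ => f k) = (finRange m).flatMap f := by
  rw [← map_coe_finRange_eq_range, flatMap_map]
  simp only [Fin.cast_val_eq_self]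

namespace SimpleGraph.Walk

variable {V : Type*} {G : SimpleGraph V} {u v : V}

section AppendChain

def appendChain {a : ℕ → V} (P : ∀ k, G.Walk (a k) (a (k + 1))) : ∀ n, G.Walk (a 0) (a n)
  | 0 => nil
  | n + 1 => (appendChain P n).append (P n)

variable {a : ℕ → V} (P : ∀ k, G.Walk (a k) (a (k + 1)))

theorem edges_appendChain (n : ℕ) :
    (appendChain P n).edges = (range n).flatMap fun k => (P k).edges := by
  induction n with
  | zero => rfl
  | succ n ih => simp [appendChain, ih, range_succ]

theorem support_tail_appendChain (n : ℕ) :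
    (appendChain P n).support.tail = (range n).flatMap fun k => (P k).support.tail := by
  induction n with
  | zero => rfl
  | succ n ih => simp [appendChain, tail_support_append, ih, range_succ]

theorem exists_closed_walk_of_cyclic {m : ℕ} [NeZero m] {b : Fin m → V}
    (P : ∀ i : Fin m, G.Walk (b (i - 1)) (b i)) :
    ∃ q : G.Walk (b (-1)) (b (-1)), q.edges = (finRange m).flatMap (fun i => (P i).edges) ∧
      q.support.tail = (finRange m).flatMap (fun i => (P i).support.tail) := by
  let Q (k : ℕ) : G.Walk (b ((k : Fin m) - 1)) (b (((k + 1 : ℕ) : Fin m) - 1)) :=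
    (P k).copy rfl (by rw [Nat.cast_succ, add_sub_cancel_right])
  refine ⟨(appendChain (a := fun k : ℕ => b ((k : Fin m) - 1)) Q m).copy (by simp) (by simp),
    ?_, ?_⟩
  · simp only [edges_copy, edges_appendChain, Q]
    exact flatMap_range_natCast fun i => (P i).edges
  · simp only [support_copy, support_tail_appendChain, Q]
    exact flatMap_range_natCast fun i => (P i).support.tail

end AppendChain

theorem IsPath.mem_support_tail_iff {p : G.Walk u v} (hp : p.IsPath) {x : V} :
    x ∈ p.support.tail ↔ x ∈ p.support ∧ x ≠ u := by
  have hnodup := hp.support_nodup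
  rw [← cons_tail_support, nodup_cons] at hnodup
  refine ⟨fun hx => ⟨mem_of_mem_tail hx, by rintro rfl; exact hnodup.1 hx⟩, fun ⟨hx, hne⟩ => ?_⟩
  rw [← cons_tail_support, mem_cons] at hx
  exact hx.resolve_left hne

theorem IsHamiltonian.ne [DecidableEq V] [Nontrivial V] {p : G.Walk u v} (hp : p.IsHamiltonian) :
    u ≠ v := by
  rintro rfl
  obtain rfl : p = nil := (isPath_iff_nil.1 hp.isPath).eq_nil
  obtain ⟨x, y, hxy⟩ := exists_pair_ne V
  have hx := hp.mem_support x
  have hy := hp.mem_support y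
  simp_all

theorem IsHamiltonian.mem_support_map_induce_iff [DecidableEq V] {s : Set V} {u v : s}
    {p : (G.induce s).Walk u v} (hp : p.IsHamiltonian) {x : V} :
    x ∈ (p.map (Embedding.induce s).toHom).support ↔ x ∈ s := by
  simp only [support_map, mem_map]
  exact ⟨by rintro ⟨y, -, rfl⟩; exact y.2, fun hx => ⟨⟨x, hx⟩, hp.mem_support _, rfl⟩⟩

theorem disjoint_edges_of_subsingleton {u' v' : V} {p : G.Walk u v} {q : G.Walk u' v'}
    (h : {x | x ∈ p.support ∧ x ∈ q.support}.Subsingleton) : p.edges.Disjoint q.edges := by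
  intro e hp hq
  induction e using Sym2.ind with
  | _ x y =>
    exact (adj_of_mem_edges p hp).ne <|
      h ⟨fst_mem_support_of_mem_edges p hp, fst_mem_support_of_mem_edges q hq⟩
        ⟨snd_mem_support_of_mem_edges p hp, snd_mem_support_of_mem_edges q hq⟩

theorem isHamiltonianCycle_of_nodup [DecidableEq V] {q : G.Walk u u} (hedges : q.edges.Nodup)
    (htail : q.support.tail.Nodup) (hmem : ∀ x, x ∈ q.support.tail) : q.IsHamiltonianCycle := by
  have hnil : q ≠ nil := by
    rintro rfl
    simpa using hmem u
  refine isHamiltonianCycle_iff_isCycle_and_support_count_tail_eq_one.2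
    ⟨(isCycle_def _).2 ⟨⟨hedges⟩, hnil, htail⟩, fun x => count_eq_one_of_mem htail (hmem x)⟩

end SimpleGraph.Walk

structure IsCyclicChain {V : Type*} [DecidableEq V] {m : ℕ} [NeZero m] (W : Fin m → Finset V)
    (a : Fin m → V) : Prop where
  inter_add_one : ∀ i, W i ∩ W (i + 1) = {a i}
  inter_eq_empty : ∀ i j, i ≠ j → j ≠ i + 1 → i ≠ j + 1 → W i ∩ W j = ∅

namespace IsCyclicChain

variable {V : Type*} [DecidableEq V] {m : ℕ} [NeZero m] {W : Fin m → Finset V} {a : Fin m → V}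
  {i j : Fin m}

theorem mem (hW : IsCyclicChain W a) (i : Fin m) : a i ∈ W i :=
  (Finset.mem_inter.1 (hW.inter_add_one i ▸ Finset.mem_singleton_self (a i))).1

theorem inter_eq (hW : IsCyclicChain W a) (hij : i ≠ j) :
    W i ∩ W j = ∅ ∨ W i ∩ W j = {a (i - 1)} ∨ W i ∩ W j = {a (j - 1)} := by
  by_cases hj : j = i + 1
  · subst hj
    rw [hW.inter_add_one, add_sub_cancel_right]
    exact Or.inr (Or.inr rfl)
  by_cases hi : i = j + 1
  · subst hi
    rw [Finset.inter_comm, hW.inter_add_one, add_sub_cancel_right]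
    exact Or.inr (Or.inl rfl)
  exact Or.inl (hW.inter_eq_empty i j hij hj hi)

theorem inter_subsingleton (hW : IsCyclicChain W a) (hij : i ≠ j) :
    {x | x ∈ W i ∧ x ∈ W j}.Subsingleton := by
  simp only [← Finset.mem_inter]
  rcases hW.inter_eq hij with h | h | h <;> simp [h]

theorem eq_or_eq_of_mem_of_mem (hW : IsCyclicChain W a) (hij : i ≠ j) {x : V} (hi : x ∈ W i)
    (hj : x ∈ W j) : x = a (i - 1) ∨ x = a (j - 1) := by
  have hx : x ∈ W i ∩ W j := Finset.mem_inter.2 ⟨hi, hj⟩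
  rcases hW.inter_eq hij with h | h | h <;> simp_all

theorem exists_isHamiltonianCycle {G : SimpleGraph V} (hW : IsCyclicChain W a)
    (hcover : ∀ v, ∃ i, v ∈ W i) (P : ∀ i, G.Walk (a (i - 1)) (a i)) (hP : ∀ i, (P i).IsPath)
    (hmem : ∀ i x, x ∈ (P i).support ↔ x ∈ W i) (hend : ∀ i, a (i - 1) ≠ a i) :
    ∃ q : G.Walk (a (-1)) (a (-1)),
      q.IsHamiltonianCycle ∧ q.edges = (finRange m).flatMap fun i => (P i).edges := by
  have hmem_tail i x : x ∈ (P i).support.tail ↔ x ∈ W i ∧ x ≠ a (i - 1) := by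
    rw [(hP i).mem_support_tail_iff, hmem]
  obtain ⟨q, hedges, htail⟩ := Walk.exists_closed_walk_of_cyclic P
  refine ⟨q, Walk.isHamiltonianCycle_of_nodup ?_ ?_ ?_, hedges⟩
  · rw [hedges, nodup_flatMap]
    refine ⟨fun i _ => (hP i).isTrail.edges_nodup,
      (nodup_finRange m).pairwise_of_forall_ne fun i _ j _ hij => ?_⟩
    apply Walk.disjoint_edges_of_subsingleton
    simpa only [hmem] using hW.inter_subsingleton hij
  · rw [htail, nodup_flatMap]
    refine ⟨fun i _ => (hP i).support_nodup.sublist (tail_sublist _),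
      (nodup_finRange m).pairwise_of_forall_ne fun i _ j _ hij x hi hj => ?_⟩
    rw [hmem_tail] at hi hj
    exact (hW.eq_or_eq_of_mem_of_mem hij hi.1 hj.1).elim hi.2 hj.2
  · intro v
    rw [htail, mem_flatMap]
    obtain ⟨i, hi⟩ := hcover v
    by_cases hv : v = a (i - 1)
    · exact ⟨i - 1, mem_finRange _, (hmem_tail _ _).2 ⟨hv ▸ hW.mem _, hv ▸ (hend _).symm⟩⟩
    · exact ⟨i, mem_finRange _, (hmem_tail _ _).2 ⟨hi, hv⟩⟩

end IsCyclicChain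

theorem glue_fixed_ham_paths_into_ham_cycle_general {V : Type} [DecidableEq V]
    (G : SimpleGraph V) (m : ℕ) [NeZero m] (W : Fin m → Finset V) (a : Fin m → V)
    (hsize : ∀ i, 3 ≤ (W i).card)
    (hcover : ∀ v : V, ∃ i, v ∈ W i)
    (hconsec : ∀ i, W i ∩ W (i + 1) = {a i})
    (hdisj : ∀ i j : Fin m, i ≠ j → j ≠ i + 1 → i ≠ j + 1 → W i ∩ W j = ∅)
    (haW : ∀ i, a i ∈ W i) (haW' : ∀ i, a (i - 1) ∈ W i)
    (p : ∀ i, (G.induce (↑(W i) : Set V)).Walk ⟨a (i - 1), haW' i⟩ ⟨a i, haW i⟩)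
    (hp : ∀ i, (p i).IsHamiltonian) :
    ∃ (b : V) (q : G.Walk b b), q.IsHamiltonianCycle ∧
      q.edges.toFinset = Finset.univ.biUnion
        (fun i => ((p i).edges.map (Sym2.map (fun z : (↑(W i) : Set V) => (z : V)))).toFinset) := by
  let P (i : Fin m) : G.Walk (a (i - 1)) (a i) := (p i).map (Embedding.induce (W i : Set V)).toHom
  have hPedges i : (P i).edges = (p i).edges.map (Sym2.map (↑)) := Walk.edges_map _ _
  have hend i : a (i - 1) ≠ a i := by
    have : Nontrivial (W i : Set V) := Set.nontrivial_coe_sort.2 <|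
      Finset.one_lt_card_iff_nontrivial.1 (by linarith [hsize i])
    exact fun h => (hp i).ne (Subtype.ext h)
  obtain ⟨q, hq, hedges⟩ := IsCyclicChain.exists_isHamiltonianCycle ⟨hconsec, hdisj⟩ hcover P
    (fun i => (hp i).isPath.map (Embedding.induce (G := G) _).injective)
    (fun i _ => (hp i).mem_support_map_induce_iff) hend
  refine ⟨_, q, hq, ?_⟩
  ext e
  simp [hedges, hPedges]

/-- The gluing lemma: if the vertex set of `G` is covered by a cyclic chain of sets
`W 0, …, W (m-1)` (`m ≥ 2`), consecutive sets sharing exactly the vertex `a i`,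
non-consecutive sets disjoint, each of size at least `3`, and each induced subgraph
`G[W i]` has a Hamiltonian path `p i` from `a (i-1)` to `a i`, then the union of the
edge sets of the paths `p i` is the edge set of a Hamiltonian cycle of `G`. -/
theorem glue_fixed_ham_paths_into_ham_cycle {V : Type} [Fintype V] [DecidableEq V]
    (G : SimpleGraph V) (m : ℕ) [NeZero m] (hm : 2 ≤ m) (W : Fin m → Finset V) (a : Fin m → V)
    (hsize : ∀ i, 3 ≤ (W i).card)
    (hcover : ∀ v : V, ∃ i, v ∈ W i)
    (hconsec : ∀ i, W i ∩ W (i + 1) = {a i})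
    (hdisj : ∀ i j : Fin m, i ≠ j → j ≠ i + 1 → i ≠ j + 1 → W i ∩ W j = ∅)
    (haW : ∀ i, a i ∈ W i) (haW' : ∀ i, a (i - 1) ∈ W i)
    (p : ∀ i, (G.induce (↑(W i) : Set V)).Walk ⟨a (i - 1), haW' i⟩ ⟨a i, haW i⟩)
    (hp : ∀ i, (p i).IsHamiltonian) :
    ∃ (b : V) (q : G.Walk b b), q.IsHamiltonianCycle ∧
      q.edges.toFinset = Finset.univ.biUnion
        (fun i => ((p i).edges.map (Sym2.map (fun z : (↑(W i) : Set V) => (z : V)))).toFinset) :=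
  glue_fixed_ham_paths_into_ham_cycle_general G m W a hsize hcover hconsec hdisj haW haW' p hp
end

section
/- If Maker has winning strategies as the second player in Maker-Breaker games (X_1, F_1) and (X_2, F_2) on disjoint boards, then Maker as second player has a strategy in the game on X_1 ∪ X_2 with winning sets {A_1 ∪ A_2 : A_1 ∈ F_1, A_2 ∈ F_2} guaranteeing he claims some A_1 ∈ F_1 and some A_2 ∈ F_2 by the end of the game, where a move by Maker in a component where he cannot respond is wasted without harm. -/
namespace ParallelPlayAux

variable {α : Type} [DecidableEq α]

lemma free_maker (X M B : Finset α) {g : α} (hg : g ∈ X) (hgM : g ∉ M) (hgB : g ∉ B) :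
    X \ (insert g M ∪ B) = (X \ (M ∪ B)).erase g := by
  ext x
  simp only [Finset.mem_sdiff, Finset.mem_union, Finset.mem_insert, Finset.mem_erase, not_or]
  constructor
  · rintro ⟨hx, ⟨hne, hM⟩, hB⟩; exact ⟨hne, hx, hM, hB⟩
  · rintro ⟨hne, hx, hM, hB⟩; exact ⟨hx, ⟨hne, hM⟩, hB⟩

lemma free_breaker (X M B : Finset α) {g : α} (hg : g ∈ X) (hgM : g ∉ M) (hgB : g ∉ B) :
    X \ (M ∪ insert g B) = (X \ (M ∪ B)).erase g := by
  ext x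
  simp only [Finset.mem_sdiff, Finset.mem_union, Finset.mem_insert, Finset.mem_erase, not_or]
  constructor
  · rintro ⟨hx, hM, hne, hB⟩; exact ⟨hne, hx, hM, hB⟩
  · rintro ⟨hne, hx, hM, hB⟩; exact ⟨hx, hM, hne, hB⟩

lemma card_maker (X M B : Finset α) {g : α} (hg : g ∈ X) (hgM : g ∉ M) (hgB : g ∉ B) :
    (X \ (insert g M ∪ B)).card + 1 = (X \ (M ∪ B)).card := by
  rw [free_maker X M B hg hgM hgB]
  exact Finset.card_erase_add_one (by simp [hg, hgM, hgB])

lemma card_breaker (X M B : Finset α) {g : α} (hg : g ∈ X) (hgM : g ∉ M) (hgB : g ∉ B) :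
    (X \ (M ∪ insert g B)).card + 1 = (X \ (M ∪ B)).card := by
  rw [free_breaker X M B hg hgM hgB]
  exact Finset.card_erase_add_one (by simp [hg, hgM, hgB])

lemma exists_subset {X : Finset α} {F : Set (Finset α)} :
    ∀ {t : Bool} {M B : Finset α}, MakerWins X F t M B → ∃ A ∈ F, A ⊆ M ∪ (X \ B) := by
  intro t M B h
  induction h with
  | claim A hA hAM => exact ⟨A, hA, hAM.trans Finset.subset_union_left⟩
  | makerMove e he heM heB h ih =>
      obtain ⟨A, hA, hsub⟩ := ih
      refine ⟨A, hA, fun x hx => ?_⟩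
      have hx' := hsub hx
      simp only [Finset.mem_union, Finset.mem_insert, Finset.mem_sdiff] at hx' ⊢
      rcases hx' with (rfl | hM) | h2
      · exact Or.inr ⟨he, heB⟩
      · exact Or.inl hM
      · exact Or.inr h2
  | breakerMove e he heM heB h ih =>
      obtain ⟨A, hA, hsub⟩ := ih e he heM heB
      refine ⟨A, hA, fun x hx => ?_⟩
      have hx' := hsub hx
      simp only [Finset.mem_union, Finset.mem_sdiff, Finset.mem_insert, not_or] at hx' ⊢
      tauto

lemma exhausted {X : Finset α} {F : Set (Finset α)} {t : Bool} {M B : Finset α}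
    (h : MakerWins X F t M B) (hfree : ∀ x ∈ X, x ∈ M ∨ x ∈ B) : ∃ A ∈ F, A ⊆ M := by
  obtain ⟨A, hA, hsub⟩ := exists_subset h
  refine ⟨A, hA, fun x hx => ?_⟩
  have hx' := hsub hx
  simp only [Finset.mem_union, Finset.mem_sdiff] at hx'
  rcases hx' with hM | ⟨hxX, hxB⟩
  · exact hM
  · rcases hfree x hxX with hM | hB
    · exact hM
    · exact absurd hB hxB

/-- Pass: if it is Breaker's turn in a Maker-winning position, Maker also wins with the move;
    Del: removing an element from Breaker's claimed set keeps the position Maker-winning. -/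
lemma pass_del (X : Finset α) (F : Set (Finset α)) :
    ∀ n : ℕ,
      (∀ M B : Finset α, (X \ (M ∪ B)).card ≤ n →
        MakerWins X F false M B → MakerWins X F true M B) ∧
      (∀ (t : Bool) (M B : Finset α) (e : α), (X \ (M ∪ B)).card ≤ n →
        e ∈ B → e ∉ M → MakerWins X F t M B → MakerWins X F t M (B.erase e)) := by
  intro n
  induction n using Nat.strong_induction_on with
  | _ n IH =>
  have pass : ∀ M B : Finset α, (X \ (M ∪ B)).card ≤ n →
      MakerWins X F false M B → MakerWins X F true M B := by
    intro M B hcard h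
    cases h with
    | claim A hA hAM => exact .claim A hA hAM
    | breakerMove w hw hwM hwB h =>
      have hw1 := h w hw hwM hwB
      have hc1 := card_breaker X M B hw hwM hwB
      cases hw1 with
      | claim A hA hAM => exact .claim A hA hAM
      | makerMove f hf hfM hfB h' =>
        have hfw : f ≠ w := by
          intro hh; subst hh; exact hfB (Finset.mem_insert_self _ _)
        have hfB' : f ∉ B := fun hb => hfB (Finset.mem_insert_of_mem hb)
        have hc2 := card_maker X M (insert w B) hf hfM hfB
        have hwM' : w ∉ insert f M := by
          simp only [Finset.mem_insert, not_or]
          exact ⟨Ne.symm hfw, hwM⟩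
        have hdel := (IH (n - 1) (by omega)).2 false (insert f M) (insert w B) w
          (by omega) (Finset.mem_insert_self _ _) hwM' h'
        rw [Finset.erase_insert hwB] at hdel
        exact .makerMove f hf hfM hfB' hdel
  refine ⟨pass, ?_⟩
  intro t M B e hcard heB heM h
  cases h with
  | claim A hA hAM => exact .claim A hA hAM
  | makerMove f hf hfM hfB h' =>
    have hfe : f ≠ e := fun hh => hfB (hh ▸ heB)
    have hc1 := card_maker X M B hf hfM hfB
    have heM' : e ∉ insert f M := by
      simp only [Finset.mem_insert, not_or]
      exact ⟨Ne.symm hfe, heM⟩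
    have hdel := (IH (n - 1) (by omega)).2 false (insert f M) B e (by omega) heB heM' h'
    exact .makerMove f hf hfM (fun hb => hfB (Finset.mem_of_mem_erase hb)) hdel
  | breakerMove w hw hwM hwB h =>
    refine .breakerMove w hw hwM (fun hb => hwB (Finset.mem_of_mem_erase hb)) ?_
    intro g hg hgM hgB'
    by_cases hge : g = e
    · subst hge
      rw [Finset.insert_erase heB]
      exact pass M B hcard (.breakerMove w hw hwM hwB h)
    · have hgB : g ∉ B := fun hb => hgB' (Finset.mem_erase.2 ⟨hge, hb⟩)
      have h' := h g hg hgM hgB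
      have hc1 := card_breaker X M B hg hgM hgB
      have hdel := (IH (n - 1) (by omega)).2 true M (insert g B) e (by omega)
        (Finset.mem_insert_of_mem heB) heM h'
      rw [Finset.erase_insert_of_ne hge] at hdel
      exact hdel

/-- Giving Maker extra elements (and possibly converting Breaker elements to Maker's)
never hurts Maker. -/
lemma mono {X : Finset α} {F : Set (Finset α)} :
    ∀ {t : Bool} {M B : Finset α}, MakerWins X F t M B → ∀ (M' B' : Finset α),
      M ⊆ M' → B' ⊆ B → B ⊆ M' ∪ B' → Disjoint M' B' → MakerWins X F t M' B' := by
  intro t M B h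
  induction h with
  | claim A hA hAM =>
    intro M' B' hMM' _ _ _
    exact .claim A hA (hAM.trans hMM')
  | makerMove e he heM heB h ih =>
    intro M' B' hMM' hB'B hBMB hdisj
    by_cases heM' : e ∈ M'
    · have hwin := ih M' B' (Finset.insert_subset heM' hMM') hB'B hBMB hdisj
      exact (pass_del X F ((X \ (M' ∪ B')).card)).1 M' B' le_rfl hwin
    · have heB' : e ∉ B' := fun hb => heB (hB'B hb)
      refine .makerMove e he heM' heB' ?_
      exact ih (insert e M') B' (Finset.insert_subset_insert _ hMM') hB'B
        (hBMB.trans (Finset.union_subset_union_left (Finset.subset_insert _ _)))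
        (Finset.disjoint_insert_left.mpr ⟨heB', hdisj⟩)
  | @breakerMove M B w hw hwM hwB h ih =>
    intro M' B' hMM' hB'B hBMB hdisj
    by_cases hfree : ∃ w', w' ∈ X ∧ w' ∉ M' ∧ w' ∉ B'
    · obtain ⟨w', hw', hw'M, hw'B⟩ := hfree
      refine .breakerMove w' hw' hw'M hw'B ?_
      intro f hf hfM' hfB'
      have hfB : f ∉ B := fun hb => by
        rcases Finset.mem_union.1 (hBMB hb) with hh | hh
        · exact hfM' hh
        · exact hfB' hh
      have hfM : f ∉ M := fun hm => hfM' (hMM' hm)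
      refine ih f hf hfM hfB M' (insert f B') hMM'
        (Finset.insert_subset_insert _ hB'B) ?_
        (Finset.disjoint_insert_right.mpr ⟨hfM', hdisj⟩)
      intro x hx
      rcases Finset.mem_insert.1 hx with rfl | hx
      · exact Finset.mem_union_right _ (Finset.mem_insert_self _ _)
      · rcases Finset.mem_union.1 (hBMB hx) with hh | hh
        · exact Finset.mem_union_left _ hh
        · exact Finset.mem_union_right _ (Finset.mem_insert_of_mem hh)
    · push_neg at hfree
      obtain ⟨A, hA, hsub⟩ := exists_subset (MakerWins.breakerMove w hw hwM hwB h)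
      refine .claim A hA fun x hx => ?_
      rcases Finset.mem_union.1 (hsub hx) with hM | hXB
      · exact hMM' hM
      · have hxX := (Finset.mem_sdiff.1 hXB).1
        have hxB := (Finset.mem_sdiff.1 hXB).2
        by_cases hxM' : x ∈ M'
        · exact hxM'
        · exact absurd (hB'B (hfree x hxX hxM')) hxB

lemma comb_swap {X₁ X₂ : Finset α} {F₁ F₂ : Set (Finset α)} {t : Bool} {M B : Finset α}
    (h : MakerWins (X₂ ∪ X₁) {A | ∃ A₂ ∈ F₂, ∃ A₁ ∈ F₁, A = A₂ ∪ A₁} t M B) :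
    MakerWins (X₁ ∪ X₂) {A | ∃ A₁ ∈ F₁, ∃ A₂ ∈ F₂, A = A₁ ∪ A₂} t M B := by
  have hs : {A : Finset α | ∃ A₂ ∈ F₂, ∃ A₁ ∈ F₁, A = A₂ ∪ A₁} =
      {A : Finset α | ∃ A₁ ∈ F₁, ∃ A₂ ∈ F₂, A = A₁ ∪ A₂} := by
    ext A
    constructor
    · rintro ⟨A₂, h₂, A₁, h₁, rfl⟩; exact ⟨A₁, h₁, A₂, h₂, Finset.union_comm _ _⟩
    · rintro ⟨A₁, h₁, A₂, h₂, rfl⟩; exact ⟨A₂, h₂, A₁, h₁, Finset.union_comm _ _⟩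
  rw [Finset.union_comm X₂ X₁, hs] at h
  exact h

/-- The continuation after the first game has been won by Maker. -/
lemma afterDone (X₁ X₂ : Finset α) (hX : Disjoint X₁ X₂) (F₁ F₂ : Set (Finset α))
    (M₁ B₁' M₂ B₂ : Finset α) (hM₁ : M₁ ⊆ X₁) (hB₁ : B₁' ⊆ X₁) (hM₂ : M₂ ⊆ X₂) (hB₂ : B₂ ⊆ X₂)
    (hd₂ : Disjoint M₂ B₂)
    (A₁ : Finset α) (hA₁ : A₁ ∈ F₁) (hA₁M : A₁ ⊆ M₁)
    (h₂ : MakerWins X₂ F₂ false M₂ B₂)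
    (rec : ∀ M₁' B₁'' M₂' B₂' : Finset α, M₁' ⊆ X₁ → B₁'' ⊆ X₁ → M₂' ⊆ X₂ → B₂' ⊆ X₂ →
      Disjoint M₁' B₁'' → Disjoint M₂' B₂' →
      (X₁ \ (M₁' ∪ B₁'')).card + (X₂ \ (M₂' ∪ B₂')).card + 1 ≤
        (X₁ \ (M₁ ∪ B₁')).card + (X₂ \ (M₂ ∪ B₂)).card →
      MakerWins X₁ F₁ false M₁' B₁'' → MakerWins X₂ F₂ false M₂' B₂' →
      MakerWins (X₁ ∪ X₂) {A | ∃ A₁ ∈ F₁, ∃ A₂ ∈ F₂, A = A₁ ∪ A₂} false (M₁' ∪ M₂') (B₁'' ∪ B₂'))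
    (hd₁ : Disjoint M₁ B₁') :
    MakerWins (X₁ ∪ X₂) {A | ∃ A₁ ∈ F₁, ∃ A₂ ∈ F₂, A = A₁ ∪ A₂} true (M₁ ∪ M₂) (B₁' ∪ B₂) := by
  by_cases hfree : ∃ g, g ∈ X₁ ∪ X₂ ∧ g ∉ M₁ ∪ M₂ ∧ g ∉ B₁' ∪ B₂
  · obtain ⟨g, hg, hgM, hgB⟩ := hfree
    simp only [Finset.mem_union, not_or] at hgM hgB
    refine .makerMove g hg (by simp [Finset.mem_union, hgM.1, hgM.2]) (by simp [Finset.mem_union, hgB.1, hgB.2]) ?_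
    rcases Finset.mem_union.1 hg with hg1 | hg2
    · -- wasted move on the first board
      rw [← Finset.insert_union]
      refine rec (insert g M₁) B₁' M₂ B₂ (Finset.insert_subset hg1 hM₁) hB₁ hM₂ hB₂
        (Finset.disjoint_insert_left.mpr ⟨hgB.1, hd₁⟩) hd₂ ?_
        (.claim A₁ hA₁ (hA₁M.trans (Finset.subset_insert _ _))) h₂
      have hc := card_maker X₁ M₁ B₁' hg1 hgM.1 hgB.1
      omega
    · -- extra Maker element on the second board
      rw [← Finset.union_insert]
      refine rec M₁ B₁' (insert g M₂) B₂ hM₁ hB₁ (Finset.insert_subset hg2 hM₂) hB₂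
        hd₁ (Finset.disjoint_insert_left.mpr ⟨hgB.2, hd₂⟩) ?_
        (.claim A₁ hA₁ hA₁M) ?_
      · have hc := card_maker X₂ M₂ B₂ hg2 hgM.2 hgB.2
        omega
      · exact mono h₂ (insert g M₂) B₂ (Finset.subset_insert _ _) subset_rfl
          Finset.subset_union_right
          (Finset.disjoint_insert_left.mpr ⟨hgB.2, hd₂⟩)
  · -- everything claimed: both games must be already won
    push_neg at hfree
    have h2ex : ∀ x ∈ X₂, x ∈ M₂ ∨ x ∈ B₂ := by
      intro x hx
      by_cases hxM : x ∈ M₂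
      · exact Or.inl hxM
      · have hxM1 : x ∉ M₁ := fun hm => Finset.disjoint_left.mp hX (hM₁ hm) hx
        have hxB : x ∈ B₁' ∪ B₂ := hfree x (Finset.mem_union_right _ hx)
          (by simp [Finset.mem_union, hxM1, hxM])
        rcases Finset.mem_union.1 hxB with hb | hb
        · exact absurd hx (Finset.disjoint_left.mp hX (hB₁ hb))
        · exact Or.inr hb
    obtain ⟨A₂, hA₂, hA₂M⟩ := exhausted h₂ h2ex
    exact .claim (A₁ ∪ A₂) ⟨A₁, hA₁, A₂, hA₂, rfl⟩ (Finset.union_subset_union hA₁M hA₂M)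

/-- Maker's answer after Breaker moves on the first board. -/
lemma key (X₁ X₂ : Finset α) (hX : Disjoint X₁ X₂) (F₁ F₂ : Set (Finset α))
    (M₁ B₁ M₂ B₂ : Finset α) (hM₁ : M₁ ⊆ X₁) (hB₁ : B₁ ⊆ X₁) (hM₂ : M₂ ⊆ X₂) (hB₂ : B₂ ⊆ X₂)
    (hd₁ : Disjoint M₁ B₁) (hd₂ : Disjoint M₂ B₂)
    (h₁ : MakerWins X₁ F₁ false M₁ B₁) (h₂ : MakerWins X₂ F₂ false M₂ B₂)
    (f : α) (hf : f ∈ X₁) (hfM : f ∉ M₁) (hfB : f ∉ B₁)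
    (rec : ∀ M₁' B₁' M₂' B₂' : Finset α, M₁' ⊆ X₁ → B₁' ⊆ X₁ → M₂' ⊆ X₂ → B₂' ⊆ X₂ →
      Disjoint M₁' B₁' → Disjoint M₂' B₂' →
      (X₁ \ (M₁' ∪ B₁')).card + (X₂ \ (M₂' ∪ B₂')).card + 2 ≤
        (X₁ \ (M₁ ∪ B₁)).card + (X₂ \ (M₂ ∪ B₂)).card →
      MakerWins X₁ F₁ false M₁' B₁' → MakerWins X₂ F₂ false M₂' B₂' →
      MakerWins (X₁ ∪ X₂) {A | ∃ A₁ ∈ F₁, ∃ A₂ ∈ F₂, A = A₁ ∪ A₂} false (M₁' ∪ M₂') (B₁' ∪ B₂')) :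
    MakerWins (X₁ ∪ X₂) {A | ∃ A₁ ∈ F₁, ∃ A₂ ∈ F₂, A = A₁ ∪ A₂} true (M₁ ∪ M₂)
      (insert f B₁ ∪ B₂) := by
  have hcB := card_breaker X₁ M₁ B₁ hf hfM hfB
  have hrec' : ∀ M₁' B₁'' M₂' B₂' : Finset α, M₁' ⊆ X₁ → B₁'' ⊆ X₁ → M₂' ⊆ X₂ → B₂' ⊆ X₂ →
      Disjoint M₁' B₁'' → Disjoint M₂' B₂' →
      (X₁ \ (M₁' ∪ B₁'')).card + (X₂ \ (M₂' ∪ B₂')).card + 1 ≤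
        (X₁ \ (M₁ ∪ insert f B₁)).card + (X₂ \ (M₂ ∪ B₂)).card →
      MakerWins X₁ F₁ false M₁' B₁'' → MakerWins X₂ F₂ false M₂' B₂' →
      MakerWins (X₁ ∪ X₂) {A | ∃ A₁ ∈ F₁, ∃ A₂ ∈ F₂, A = A₁ ∪ A₂} false (M₁' ∪ M₂') (B₁'' ∪ B₂') := by
    intro M₁' B₁'' M₂' B₂' u1 u2 u3 u4 u5 u6 hc hw1 hw2
    exact rec M₁' B₁'' M₂' B₂' u1 u2 u3 u4 u5 u6 (by omega) hw1 hw2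
  have hdins : Disjoint M₁ (insert f B₁) := Finset.disjoint_insert_right.mpr ⟨hfM, hd₁⟩
  cases h₁ with
  | claim A₁ hA₁ hA₁M =>
    exact afterDone X₁ X₂ hX F₁ F₂ M₁ (insert f B₁) M₂ B₂ hM₁
      (Finset.insert_subset hf hB₁) hM₂ hB₂ hd₂ A₁ hA₁ hA₁M h₂ hrec' hdins
  | breakerMove w hw hwM hwB h =>
    have h' := h f hf hfM hfB
    cases h' with
    | claim A₁ hA₁ hA₁M =>
      exact afterDone X₁ X₂ hX F₁ F₂ M₁ (insert f B₁) M₂ B₂ hM₁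
        (Finset.insert_subset hf hB₁) hM₂ hB₂ hd₂ A₁ hA₁ hA₁M h₂ hrec' hdins
    | makerMove g hg hgM hgB h'' =>
      have hgB₁ : g ∉ B₁ := fun hb => hgB (Finset.mem_insert_of_mem hb)
      have hgf : g ≠ f := fun hh => hgB (hh ▸ Finset.mem_insert_self _ _)
      have hgM₂ : g ∉ M₂ := fun hm => Finset.disjoint_left.mp hX hg (hM₂ hm)
      have hgB₂ : g ∉ B₂ := fun hb => Finset.disjoint_left.mp hX hg (hB₂ hb)
      refine .makerMove g (Finset.mem_union_left _ hg)
        (by simp [Finset.mem_union, hgM, hgM₂])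
        (by simp [Finset.mem_union, Finset.mem_insert, hgf, hgB₁, hgB₂]) ?_
      rw [← Finset.insert_union]
      refine rec (insert g M₁) (insert f B₁) M₂ B₂ (Finset.insert_subset hg hM₁)
        (Finset.insert_subset hf hB₁) hM₂ hB₂
        (Finset.disjoint_insert_left.mpr ⟨hgB, hdins⟩) hd₂ ?_ h'' h₂
      have hcM := card_maker X₁ M₁ (insert f B₁) hg hgM hgB
      omega

lemma parallel_aux :
    ∀ n : ℕ, ∀ X₁ X₂ : Finset α, Disjoint X₁ X₂ →
      ∀ (F₁ F₂ : Set (Finset α)) (M₁ B₁ M₂ B₂ : Finset α),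
        M₁ ⊆ X₁ → B₁ ⊆ X₁ → M₂ ⊆ X₂ → B₂ ⊆ X₂ →
        Disjoint M₁ B₁ → Disjoint M₂ B₂ →
        (X₁ \ (M₁ ∪ B₁)).card + (X₂ \ (M₂ ∪ B₂)).card ≤ n →
        MakerWins X₁ F₁ false M₁ B₁ → MakerWins X₂ F₂ false M₂ B₂ →
        MakerWins (X₁ ∪ X₂) {A | ∃ A₁ ∈ F₁, ∃ A₂ ∈ F₂, A = A₁ ∪ A₂} false (M₁ ∪ M₂)
          (B₁ ∪ B₂) := by
  intro n
  induction n using Nat.strong_induction_on with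
  | _ n IH =>
  intro X₁ X₂ hX F₁ F₂ M₁ B₁ M₂ B₂ hM₁ hB₁ hM₂ hB₂ hd₁ hd₂ hcard h₁ h₂
  by_cases hfree : ∃ w, w ∈ X₁ ∪ X₂ ∧ w ∉ M₁ ∪ M₂ ∧ w ∉ B₁ ∪ B₂
  · obtain ⟨w, hw, hwM, hwB⟩ := hfree
    refine .breakerMove w hw hwM hwB ?_
    intro f hf hfM hfB
    simp only [Finset.mem_union, not_or] at hfM hfB
    rcases Finset.mem_union.1 hf with hf1 | hf2
    · rw [← Finset.insert_union]
      refine key X₁ X₂ hX F₁ F₂ M₁ B₁ M₂ B₂ hM₁ hB₁ hM₂ hB₂ hd₁ hd₂ h₁ h₂ f hf1 hfM.1 hfB.1 ?_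
      intro M₁' B₁' M₂' B₂' u1 u2 u3 u4 u5 u6 hc hw1 hw2
      exact IH (n - 1) (by omega) X₁ X₂ hX F₁ F₂ M₁' B₁' M₂' B₂' u1 u2 u3 u4 u5 u6
        (by omega) hw1 hw2
    · have hkey := comb_swap (key X₂ X₁ hX.symm F₂ F₁ M₂ B₂ M₁ B₁ hM₂ hB₂ hM₁ hB₁ hd₂ hd₁
        h₂ h₁ f hf2 hfM.2 hfB.2 ?_)
      · have e1 : M₂ ∪ M₁ = M₁ ∪ M₂ := Finset.union_comm _ _
        have e2 : insert f B₂ ∪ B₁ = insert f (B₁ ∪ B₂) := by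
          rw [Finset.insert_union, Finset.union_comm]
        rw [e1, e2] at hkey
        exact hkey
      · intro M₂' B₂' M₁' B₁' u1 u2 u3 u4 u5 u6 hc hw2 hw1
        exact IH (n - 1) (by omega) X₂ X₁ hX.symm F₂ F₁ M₂' B₂' M₁' B₁' u1 u2 u3 u4 u5 u6
          (by omega) hw2 hw1
  · push_neg at hfree
    have h1ex : ∀ x ∈ X₁, x ∈ M₁ ∨ x ∈ B₁ := by
      intro x hx
      by_cases hxM : x ∈ M₁
      · exact Or.inl hxM
      · have hxM2 : x ∉ M₂ := fun hm => Finset.disjoint_left.mp hX hx (hM₂ hm)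
        have hxB : x ∈ B₁ ∪ B₂ := hfree x (Finset.mem_union_left _ hx)
          (by simp [Finset.mem_union, hxM, hxM2])
        rcases Finset.mem_union.1 hxB with hb | hb
        · exact Or.inr hb
        · exact absurd (hB₂ hb) (fun hh => Finset.disjoint_left.mp hX hx hh)
    have h2ex : ∀ x ∈ X₂, x ∈ M₂ ∨ x ∈ B₂ := by
      intro x hx
      by_cases hxM : x ∈ M₂
      · exact Or.inl hxM
      · have hxM1 : x ∉ M₁ := fun hm => Finset.disjoint_left.mp hX (hM₁ hm) hx
        have hxB : x ∈ B₁ ∪ B₂ := hfree x (Finset.mem_union_right _ hx)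
          (by simp [Finset.mem_union, hxM, hxM1])
        rcases Finset.mem_union.1 hxB with hb | hb
        · exact absurd hx (Finset.disjoint_left.mp hX (hB₁ hb))
        · exact Or.inr hb
    obtain ⟨A₁, hA₁, hA₁M⟩ := exhausted h₁ h1ex
    obtain ⟨A₂, hA₂, hA₂M⟩ := exhausted h₂ h2ex
    exact .claim (A₁ ∪ A₂) ⟨A₁, hA₁, A₂, hA₂, rfl⟩ (Finset.union_subset_union hA₁M hA₂M)

end ParallelPlayAux

/-- Playing two Maker-Breaker games in parallel: if Maker wins, as second player, the
games `(X₁, F₁)` and `(X₂, F₂)` on disjoint boards, then as second player on the board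
`X₁ ∪ X₂` he can guarantee to claim all of some `A₁ ∈ F₁` together with all of some
`A₂ ∈ F₂` by the end of the game. -/
theorem parallel_play {α : Type} [DecidableEq α]
    (X₁ X₂ : Finset α) (hX : Disjoint X₁ X₂) (F₁ F₂ : Set (Finset α))
    (hF₁ : ∀ A ∈ F₁, A ⊆ X₁) (hF₂ : ∀ A ∈ F₂, A ⊆ X₂)
    (h₁ : MakerWinsSecond X₁ F₁) (h₂ : MakerWinsSecond X₂ F₂) :
    MakerWinsSecond (X₁ ∪ X₂) {A | ∃ A₁ ∈ F₁, ∃ A₂ ∈ F₂, A = A₁ ∪ A₂} := by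
  have h := ParallelPlayAux.parallel_aux (X₁.card + X₂.card) X₁ X₂ hX F₁ F₂ ∅ ∅ ∅ ∅
    (Finset.empty_subset _) (Finset.empty_subset _) (Finset.empty_subset _)
    (Finset.empty_subset _) (Finset.disjoint_empty_left _) (Finset.disjoint_empty_left _)
    (by simp) h₁ h₂
  simpa [MakerWinsSecond] using h
end
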